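/- Let W ⊂ (k*)ⁿ be an irreducible subvariety and u : (k*)ⁿ → k* a character (monomial map) such that the image of the tropicalization of W under the induced linear map ℝⁿ → ℝ is a single point. Then u is constant on W. -/

import Mathlib

/-- Evaluation of a Laurent polynomial at a point of the torus `(K*)^n`. -/
noncomputable def evalT {K : Type*} [Field K] {n : ℕ} (f : AddMonoidAlgebra K (Fin n → ℤ))
    (p : Fin n → Kˣ) : K :=
  f.coeff.sum fun u a => a * ∏ i, (p i : K) ^ (u i)

/-- The zero locus in the torus `(K*)^n` of a set of Laurent polynomials. -/
def zeroLocus {K : Type*} [Field K] {n : ℕ}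
    (S : Set (AddMonoidAlgebra K (Fin n → ℤ))) : Set (Fin n → Kˣ) :=
  {p | ∀ f ∈ S, evalT f p = 0}

/-- A (Zariski-closed) subvariety of the torus. -/
def IsSubvariety {K : Type*} [Field K] {n : ℕ} (W : Set (Fin n → Kˣ)) : Prop :=
  ∃ S : Set (AddMonoidAlgebra K (Fin n → ℤ)), W = zeroLocus S

/-- An irreducible subvariety of the torus: nonempty, closed, and not covered by two
closed subsets unless it is contained in one of them. -/
def IsIrreducibleSubvariety {K : Type*} [Field K] {n : ℕ} (W : Set (Fin n → Kˣ)) : Prop :=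
  IsSubvariety W ∧ W.Nonempty ∧
    ∀ A B : Set (Fin n → Kˣ), IsSubvariety A → IsSubvariety B → W ⊆ A ∪ B →
      W ⊆ A ∨ W ⊆ B

/-- `val` is a (nontrivial, additively written) valuation on the units of `K`. -/
structure IsValuation {K : Type*} [Field K] (val : Kˣ → ℝ) : Prop where
  map_mul : ∀ a b : Kˣ, val (a * b) = val a + val b
  ultrametric : ∀ (a b : Kˣ) (h : (a : K) + (b : K) ≠ 0),
    min (val a) (val b) ≤ val (Units.mk0 ((a : K) + (b : K)) h)
  nontrivial : ∃ a : Kˣ, val a ≠ 0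


section EuclidDiv
open Polynomial

variable {A : Type*} [CommRing A] [IsDomain A]

theorem pseudo_div (Q : A[X]) (hQ : Q ≠ 0) (P : A[X]) :
    ∃ (k : ℕ) (W T : A[X]),
      C (Q.leadingCoeff ^ k) * P = Q * W + T ∧ T.degree < Q.degree := by
  generalize hn : P.natDegree = n
  induction n using Nat.strong_induction_on generalizing P with
  | _ n ih =>
  subst hn
  by_cases hlt : P.degree < Q.degree
  · exact ⟨0, 0, P, by simp, hlt⟩
  push_neg at hlt
  have hP : P ≠ 0 := by
    rintro rfl
    simp only [degree_zero, le_bot_iff, degree_eq_bot] at hlt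
    exact hQ hlt
  have hlcQ : Q.leadingCoeff ≠ 0 := leadingCoeff_ne_zero.2 hQ
  have hlcP : P.leadingCoeff ≠ 0 := leadingCoeff_ne_zero.2 hP
  set d : ℕ := P.natDegree - Q.natDegree with hd
  set P₁ : A[X] := C Q.leadingCoeff * P - C P.leadingCoeff * X ^ d * Q with hP₁
  have hdeg : (C P.leadingCoeff * X ^ d * Q).degree = (C Q.leadingCoeff * P).degree := by
    rw [degree_mul, degree_mul, degree_mul, degree_C hlcP, degree_C hlcQ, degree_X_pow]
    rw [degree_eq_natDegree hP, degree_eq_natDegree hQ]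
    have hle : Q.natDegree ≤ P.natDegree := natDegree_le_natDegree hlt
    rw [zero_add, zero_add]
    rw [← Nat.cast_add]
    congr 1
    omega
  have hlc : (C Q.leadingCoeff * P).leadingCoeff
      = (C P.leadingCoeff * X ^ d * Q).leadingCoeff := by
    rw [leadingCoeff_mul, leadingCoeff_mul, leadingCoeff_mul, leadingCoeff_C, leadingCoeff_C,
      leadingCoeff_X_pow]
    ring
  have hne : C Q.leadingCoeff * P ≠ 0 := mul_ne_zero (by simpa using hlcQ) hP
  have hdlt : P₁.degree < P.degree := by
    have := degree_sub_lt hdeg.symm hne hlc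
    rw [← hP₁] at this
    calc P₁.degree < (C Q.leadingCoeff * P).degree := this
      _ = P.degree := by rw [degree_mul, degree_C hlcQ, zero_add]
  by_cases hP₁0 : P₁ = 0
  · refine ⟨1, C P.leadingCoeff * X ^ d, 0, ?_, ?_⟩
    · have : C Q.leadingCoeff * P = C P.leadingCoeff * X ^ d * Q := by
        have := sub_eq_zero.1 (hP₁ ▸ hP₁0)
        linear_combination this
      rw [pow_one]; linear_combination this
    · rw [degree_zero]
      exact bot_lt_iff_ne_bot.mpr fun h => hQ (degree_eq_bot.1 h)
  · have hlt' : P₁.natDegree < P.natDegree := natDegree_lt_natDegree hP₁0 hdlt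
    obtain ⟨k, W, T, h1, h2⟩ := ih P₁.natDegree hlt' P₁ rfl
    refine ⟨k + 1, W + C (Q.leadingCoeff ^ k * P.leadingCoeff) * X ^ d, T, ?_, h2⟩
    have : C (Q.leadingCoeff ^ k) * P₁ = Q * W + T := h1
    rw [hP₁] at this
    rw [pow_succ]
    push_cast [C_mul]
    linear_combination this

theorem euclid (Q : A[X]) (P : A[X]) (hP : P ≠ 0) :
    ∃ R U V : A[X], R = U * P + V * Q ∧ R ≠ 0 ∧
      (∃ (c : A) (S : A[X]), c ≠ 0 ∧ C c * P = R * S) ∧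
      (∃ (c : A) (S : A[X]), c ≠ 0 ∧ C c * Q = R * S) := by
  generalize hn : Q.natDegree = n
  induction n using Nat.strong_induction_on generalizing Q P with
  | _ n ih =>
  subst hn
  by_cases hQ : Q = 0
  · exact ⟨P, 1, 0, by simp, hP, ⟨1, 1, one_ne_zero, by simp⟩, ⟨1, 0, one_ne_zero, by simp [hQ]⟩⟩
  have hlcQ : Q.leadingCoeff ≠ 0 := leadingCoeff_ne_zero.2 hQ
  obtain ⟨k, W, T, h1, hT⟩ := pseudo_div Q hQ P
  by_cases hT0 : T = 0
  · refine ⟨Q, 0, 1, by simp, hQ, ⟨Q.leadingCoeff ^ k, W, pow_ne_zero _ hlcQ, ?_⟩,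
      ⟨1, 1, one_ne_zero, by simp⟩⟩
    rw [h1, hT0, add_zero]
  · have hlt : T.natDegree < Q.natDegree := natDegree_lt_natDegree hT0 hT
    obtain ⟨R, U', V', hR, hR0, ⟨c₁, S₁, hc₁, hS₁⟩, ⟨c₂, S₂, hc₂, hS₂⟩⟩ :=
      ih T.natDegree hlt T Q hQ rfl
    refine ⟨R, C (Q.leadingCoeff ^ k) * V', U' - V' * W, ?_, hR0,
      ⟨c₁ * c₂ * Q.leadingCoeff ^ k, C c₂ * W * S₁ + C c₁ * S₂,
        mul_ne_zero (mul_ne_zero hc₁ hc₂) (pow_ne_zero _ hlcQ), ?_⟩, ⟨c₁, S₁, hc₁, hS₁⟩⟩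
    · rw [hR]; linear_combination (-V') * h1
    · push_cast [C_mul]; linear_combination C c₁ * C c₂ * h1 + C c₂ * W * hS₁ + C c₁ * hS₂

variable {A B K : Type*} [CommRing A] [IsDomain A] [IsNoetherianRing A]
    [CommRing B] [IsDomain B] [Algebra A B]
    [Field K] [IsAlgClosed K]


variable {A B K : Type*} [CommRing A] [IsDomain A] [IsNoetherianRing A]
    [CommRing B] [IsDomain B] [Algebra A B]
    [Field K] [IsAlgClosed K]

theorem ext_one (hinj : Function.Injective (algebraMap A B))
    (x b : B) (hb : b ≠ 0) (hmem : b ∈ Algebra.adjoin A ({x} : Set B)) :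
    ∃ s : A, s ≠ 0 ∧ ∀ φ : A →+* K, φ s ≠ 0 →
      ∃ ψ : ↥(Algebra.adjoin A ({x} : Set B)) →+* K,
        (∀ a : A, ψ (algebraMap A ↥(Algebra.adjoin A ({x} : Set B)) a) = φ a) ∧
          ψ ⟨b, hmem⟩ ≠ 0 := by
  classical
  set T : Subalgebra A B := Algebra.adjoin A ({x} : Set B) with hT
  have hrange : ∀ p : A[X], (aeval x) p ∈ T := fun p => by
    rw [hT, Algebra.adjoin_singleton_eq_range_aeval]; exact ⟨p, rfl⟩
  set eh : A[X] →+* ↥T :=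
    ((aeval x : A[X] →ₐ[A] B).codRestrict T hrange).toRingHom with heh
  have hehval : ∀ p : A[X], (eh p : B) = aeval x p := fun p => rfl
  have hsurj : Function.Surjective eh := by
    rintro ⟨y, hy⟩
    rw [hT, Algebra.adjoin_singleton_eq_range_aeval] at hy
    obtain ⟨p, hp⟩ := hy
    exact ⟨p, Subtype.ext hp⟩
  -- generic lifting construction
  have key : ∀ χ : A[X] →+* K, (∀ p ∈ RingHom.ker eh, χ p = 0) →
      ∃ ψ : ↥T →+* K, ∀ p : A[X], ψ (eh p) = χ p := by
    intro χ hχ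
    set eqv := RingHom.quotientKerEquivOfSurjective hsurj
    refine ⟨(Ideal.Quotient.lift (RingHom.ker eh) χ hχ).comp eqv.symm.toRingHom, fun p => ?_⟩
    have h1 : eqv (Ideal.Quotient.mk (RingHom.ker eh) p) = eh p := by
      exact RingHom.quotientKerEquivOfSurjective_apply_mk hsurj p
    have h2 : eqv.symm (eh p) = Ideal.Quotient.mk (RingHom.ker eh) p := by
      rw [← h1, RingEquiv.symm_apply_apply]
    simp [h2]
  obtain ⟨Qb, hQb⟩ : ∃ p : A[X], aeval x p = b := by
    have h := hmem
    rw [hT, Algebra.adjoin_singleton_eq_range_aeval] at h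
    exact h
  have hQb0 : Qb ≠ 0 := by rintro rfl; rw [map_zero] at hQb; exact hb hQb.symm
  have hkermem : ∀ p : A[X], p ∈ RingHom.ker eh ↔ aeval x p = 0 := by
    intro p
    rw [RingHom.mem_ker]
    constructor
    · intro h; have := congrArg (Subtype.val) h; simpa [hehval] using this
    · intro h; exact Subtype.ext (by simpa [hehval] using h)
  have hCne : ∀ a : A, a ≠ 0 → aeval x (C a) ≠ 0 := by
    intro a ha h
    rw [aeval_C] at h
    exact ha (hinj (by simpa using h))
  have hbeh : (⟨b, hmem⟩ : ↥T) = eh Qb := Subtype.ext (by simp [hehval, hQb])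
  have haeh : ∀ a : A, algebraMap A ↥T a = eh (C a) := fun a =>
    Subtype.ext (by rw [hehval, aeval_C]; rfl)
  by_cases hJ : ∀ p : A[X], p ∈ RingHom.ker eh → p = 0
  · -- transcendental case
    refine ⟨Qb.leadingCoeff, leadingCoeff_ne_zero.2 hQb0, fun φ hφ => ?_⟩
    have hmap0 : Qb.map φ ≠ 0 := fun h => by
      have : (Qb.map φ).coeff Qb.natDegree = φ Qb.leadingCoeff := coeff_map _ _
      rw [h] at this; exact hφ (by simpa using this.symm)
    obtain ⟨ξ, hξ⟩ : ∃ ξ : K, (Qb.map φ).eval ξ ≠ 0 := by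
      have hfin := Polynomial.finite_setOf_isRoot hmap0
      obtain ⟨ξ, hξ⟩ := hfin.infinite_compl.nonempty
      exact ⟨ξ, by simpa [Polynomial.IsRoot] using hξ⟩
    obtain ⟨ψ, hψ⟩ := key (eval₂RingHom φ ξ) (fun p hp => by rw [hJ p hp]; simp)
    refine ⟨ψ, fun a => ?_, ?_⟩
    · rw [haeh, hψ]; simp
    · rw [hbeh, hψ]
      simpa [coe_eval₂RingHom, eval₂_eq_eval_map] using hξ
  · -- algebraic case
    push_neg at hJ
    obtain ⟨p₀, hp₀J, hp₀⟩ := hJ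
    have hex : ∃ m : ℕ, ∃ p : A[X], p ∈ RingHom.ker eh ∧ p ≠ 0 ∧ p.natDegree = m :=
      ⟨p₀.natDegree, p₀, hp₀J, hp₀, rfl⟩
    set n₀ := Nat.find hex with hn₀
    obtain ⟨P, hPJ, hP0, hPdeg⟩ := Nat.find_spec hex
    have hmin : ∀ p : A[X], p ∈ RingHom.ker eh → p ≠ 0 → n₀ ≤ p.natDegree := fun p hp hp0 =>
      Nat.find_min' hex ⟨p, hp, hp0, rfl⟩
    have hPev : aeval x P = 0 := (hkermem P).1 hPJ
    have hPdeg0 : P.natDegree ≠ 0 := by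
      intro h
      obtain ⟨a, ha⟩ := natDegree_eq_zero.1 h
      refine hCne a ?_ (ha ▸ hPev)
      rintro rfl; rw [← ha] at hP0; simp at hP0
    -- per-element killing multiplier
    have hkill1 : ∀ g : A[X], g ∈ RingHom.ker eh → ∃ D : A, D ≠ 0 ∧
        ∀ (φ : A →+* K) (ξ : K), φ D ≠ 0 →
          (P.map φ).eval ξ = 0 → (g.map φ).eval ξ = 0 := by
      intro g hg
      obtain ⟨R, U, V, hR, hR0, ⟨c, S₁, hc, hS₁⟩, ⟨c', S₂, hc', hS₂⟩⟩ := euclid g P hP0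
      have hgev : aeval x g = 0 := (hkermem g).1 hg
      have hRJ : R ∈ RingHom.ker eh := by
        rw [hkermem, hR]
        simp [hPev, hgev]
      have hS₁0 : S₁ ≠ 0 := by
        rintro rfl
        rw [mul_zero] at hS₁
        exact (mul_ne_zero (fun h => hc (by simpa using (C_eq_zero.1 h))) hP0) hS₁
      have hdeg : R.natDegree + S₁.natDegree = P.natDegree := by
        have := congrArg natDegree hS₁
        rwa [natDegree_mul (fun h => hc (C_eq_zero.1 h)) hP0, natDegree_mul hR0 hS₁0,
          natDegree_C, zero_add, eq_comm] at this
      have hRmin : n₀ ≤ R.natDegree := hmin R hRJ hR0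
      have hS₁deg : S₁.natDegree = 0 := by omega
      obtain ⟨u, hu⟩ := natDegree_eq_zero.1 hS₁deg
      have hu0 : u ≠ 0 := by rintro rfl; rw [← hu] at hS₁0; simp at hS₁0
      refine ⟨u * c', mul_ne_zero hu0 hc', fun φ ξ hφ hPξ => ?_⟩
      rw [← hu] at hS₁
      have hcomb : C (u * c') * g = C c * P * S₂ := by
        rw [C_mul]; linear_combination C u * hS₂ - S₂ * hS₁
      have := congrArg (fun q : A[X] => (q.map φ).eval ξ) hcomb
      simp only [Polynomial.map_mul, map_C, eval_mul, eval_C] at this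
      rw [hPξ] at this
      simp only [mul_zero, zero_mul] at this
      rcases mul_eq_zero.1 this with h | h
      · exact absurd (by simpa using h) hφ
      · exact h
    -- killing multiplier for a finite set
    have hkill : ∀ G : Finset A[X], (↑G : Set A[X]) ⊆ (RingHom.ker eh : Set A[X]) →
        ∃ D : A, D ≠ 0 ∧ ∀ (φ : A →+* K) (ξ : K), φ D ≠ 0 →
          (P.map φ).eval ξ = 0 → ∀ g ∈ G, (g.map φ).eval ξ = 0 := by
      intro G
      induction G using Finset.induction_on with
      | empty => exact fun _ => ⟨1, one_ne_zero, fun φ ξ _ _ g hg => absurd hg (by simp)⟩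
      | @insert g G' hgnot ih =>
        intro hsub
        obtain ⟨D, hD0, hD⟩ := ih (fun p hp => hsub (by simp [hp]))
        obtain ⟨Dg, hDg0, hDg⟩ := hkill1 g (hsub (by simp))
        refine ⟨D * Dg, mul_ne_zero hD0 hDg0, fun φ ξ hφ hPξ g' hg' => ?_⟩
        rw [map_mul] at hφ
        rcases Finset.mem_insert.1 hg' with rfl | hg'
        · exact hDg φ ξ (right_ne_zero_of_mul hφ) hPξ
        · exact hD φ ξ (left_ne_zero_of_mul hφ) hPξ g' hg'
    obtain ⟨G, hG⟩ : ∃ G : Finset A[X], Ideal.span (↑G : Set A[X]) = RingHom.ker eh :=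
      IsNoetherian.noetherian (RingHom.ker eh)
    have hGsub : (↑G : Set A[X]) ⊆ (RingHom.ker eh : Set A[X]) := by
      rw [← hG]; exact Ideal.subset_span
    obtain ⟨D, hD0, hD⟩ := hkill G hGsub
    -- Bezout part
    obtain ⟨R, U, V, hR, hR0, ⟨c, S₁, hc, hS₁⟩, ⟨c', S₂, hc', hS₂⟩⟩ := euclid Qb P hP0
    have hevS : aeval x R * aeval x S₁ = 0 := by
      have := congrArg (aeval x) hS₁
      simpa [hPev] using this.symm
    have hRnotker : aeval x R ≠ 0 := by
      intro h
      have := congrArg (aeval x) hS₂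
      rw [map_mul, map_mul, h, zero_mul, aeval_C, hQb] at this
      rcases mul_eq_zero.1 this with h' | h'
      · exact hCne c' hc' (by rwa [aeval_C])
      · exact hb h'
    have hS₁ker : S₁ ∈ RingHom.ker eh := by
      rw [hkermem]
      rcases mul_eq_zero.1 hevS with h | h
      · exact absurd h hRnotker
      · exact h
    have hS₁0 : S₁ ≠ 0 := by
      rintro rfl
      rw [mul_zero] at hS₁
      exact (mul_ne_zero (fun h => hc (C_eq_zero.1 h)) hP0) hS₁
    have hdeg : R.natDegree + S₁.natDegree = P.natDegree := by
      have := congrArg natDegree hS₁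
      rwa [natDegree_mul (fun h => hc (C_eq_zero.1 h)) hP0, natDegree_mul hR0 hS₁0,
        natDegree_C, zero_add, eq_comm] at this
    have hS₁min : n₀ ≤ S₁.natDegree := hmin S₁ hS₁ker hS₁0
    have hRdeg : R.natDegree = 0 := by omega
    obtain ⟨d, hd⟩ := natDegree_eq_zero.1 hRdeg
    have hd0 : d ≠ 0 := by rintro rfl; rw [← hd] at hR0; simp at hR0
    -- now assemble
    refine ⟨P.leadingCoeff * (d * D), mul_ne_zero (leadingCoeff_ne_zero.2 hP0)
      (mul_ne_zero hd0 hD0), fun φ hφ => ?_⟩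
    rw [map_mul, map_mul] at hφ
    have hφlc : φ P.leadingCoeff ≠ 0 := left_ne_zero_of_mul hφ
    have hφd : φ d ≠ 0 := left_ne_zero_of_mul (right_ne_zero_of_mul hφ)
    have hφD : φ D ≠ 0 := right_ne_zero_of_mul (right_ne_zero_of_mul hφ)
    have hdegmap : (P.map φ).degree = P.degree :=
      degree_map_eq_of_leadingCoeff_ne_zero φ hφlc
    obtain ⟨ξ, hξ⟩ : ∃ ξ : K, (P.map φ).eval ξ = 0 := by
      obtain ⟨ξ, hξ⟩ := IsAlgClosed.exists_root (P.map φ) (by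
        rw [hdegmap, degree_eq_natDegree hP0]
        exact_mod_cast fun h => hPdeg0 (by exact_mod_cast h))
      exact ⟨ξ, hξ⟩
    have hkerχ : ∀ p ∈ RingHom.ker eh, eval₂RingHom φ ξ p = 0 := by
      intro p hp
      rw [← hG] at hp
      refine Submodule.span_induction (fun g hg => ?_) (by simp) ?_ ?_ hp
      · have := hD φ ξ hφD hξ g hg
        simpa [coe_eval₂RingHom, eval₂_eq_eval_map] using this
      · intro p q _ _ h1 h2; rw [map_add, h1, h2, add_zero]
      · intro r p _ h1; rw [smul_eq_mul, map_mul, h1, mul_zero]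
    obtain ⟨ψ, hψ⟩ := key (eval₂RingHom φ ξ) hkerχ
    refine ⟨ψ, fun a => ?_, ?_⟩
    · rw [haeh, hψ]; simp
    · rw [hbeh, hψ]
      intro h0
      have := congrArg (fun q : A[X] => (q.map φ).eval ξ) (hd ▸ hR : C d = U * P + V * Qb)
      simp only [Polynomial.map_add, Polynomial.map_mul, map_C, eval_add, eval_mul, eval_C] at this
      rw [hξ] at this
      have hQbξ : (Qb.map φ).eval ξ = 0 := by
        simpa [coe_eval₂RingHom, eval₂_eq_eval_map] using h0
      rw [hQbξ] at this
      simp at this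
      exact hφd this

end EuclidDiv

section ExtMany
open Polynomial


/-- Transport of adjoin-membership along two subalgebras (over possibly different base
rings) with the same carrier. -/
theorem adjoin_base_mono {k₁ k₂ B : Type*} [CommSemiring k₁] [CommSemiring k₂] [CommSemiring B]
    [Algebra k₁ B] [Algebra k₂ B] (S : Subalgebra k₁ B) (T : Subalgebra k₂ B)
    (hST : ∀ y : B, y ∈ S → y ∈ T) (s : Set B) (y : B)
    (hy : y ∈ Algebra.adjoin ↥S s) : y ∈ Algebra.adjoin ↥T s := by
  induction hy using Algebra.adjoin_induction with
  | mem z hz => exact Algebra.subset_adjoin hz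
  | algebraMap r =>
    have h1 : algebraMap ↥S B r = (r : B) := rfl
    have h2 : (r : B) ∈ T := hST _ r.2
    have h3 : algebraMap ↥T B ⟨(r : B), h2⟩ = (r : B) := rfl
    rw [h1, ← h3]
    exact Subalgebra.algebraMap_mem _ _
  | add a b _ _ ha hb => exact add_mem ha hb
  | mul a b _ _ ha hb => exact mul_mem ha hb

theorem ext_many {k B K : Type*} [Field k] [CommRing B] [IsDomain B] [Algebra k B]
    [Field K] [IsAlgClosed K] (s : Finset B) :
    ∀ A : Subalgebra k B, A.FG →
      Algebra.adjoin (↥A) (↑s : Set B) = ⊤ →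
      ∀ b : B, b ≠ 0 →
      ∃ sa : ↥A, sa ≠ 0 ∧ ∀ φ : ↥A →+* K, φ sa ≠ 0 →
        ∃ ψ : B →+* K, (∀ a : ↥A, ψ ↑a = φ a) ∧ ψ b ≠ 0 := by
  classical
  induction s using Finset.induction_on with
  | empty =>
    intro A _ htop b hb
    have hsurj : Function.Surjective (algebraMap ↥A B) := by
      intro y
      have : y ∈ (⊤ : Subalgebra ↥A B) := trivial
      rw [← htop] at this
      rw [Finset.coe_empty, Algebra.adjoin_empty, Algebra.mem_bot] at this
      exact this
    have hinj : Function.Injective (algebraMap ↥A B) := Subtype.coe_injective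
    set e : ↥A ≃+* B := RingEquiv.ofBijective (algebraMap ↥A B) ⟨hinj, hsurj⟩ with he
    refine ⟨e.symm b, fun h => hb ?_, fun φ hφ => ?_⟩
    · have := congrArg e h
      rwa [RingEquiv.apply_symm_apply, map_zero] at this
    · refine ⟨φ.comp e.symm.toRingHom, fun a => ?_, hφ⟩
      have : e.symm ↑a = a := e.injective (by rw [e.apply_symm_apply]; rfl)
      simp [this]
  | @insert x s' hxs ih =>
    intro A hAfg htop b hb
    have hAinj : Function.Injective (algebraMap ↥A B) := Subtype.coe_injective
    have hAnoeth : IsNoetherianRing ↥A := by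
      have : Algebra.FiniteType k ↥A := (Subalgebra.fg_iff_finiteType A).1 hAfg
      exact Algebra.FiniteType.isNoetherianRing k ↥A
    set Aa : Subalgebra ↥A B := Algebra.adjoin ↥A ({x} : Set B) with hAa
    set A' : Subalgebra k B := Aa.restrictScalars k with hA'
    have hmemA' : ∀ y : B, y ∈ A' ↔ y ∈ Aa := fun y => Subalgebra.mem_restrictScalars k
    have hA'fg : A'.FG := by
      obtain ⟨t, ht⟩ := hAfg
      refine ⟨insert x t, ?_⟩
      rw [hA', Algebra.restrictScalars_adjoin]
      rw [Finset.coe_insert, Set.insert_eq, Set.union_comm ({x} : Set B) ↑t,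
        Algebra.adjoin_union, ht, Algebra.adjoin_union, Algebra.adjoin_eq]
    have htop' : Algebra.adjoin (↥A') ((↑s' : Set B)) = ⊤ := by
      rw [eq_top_iff]
      intro y _
      have hy : y ∈ Algebra.adjoin ↥A (↑(insert x s') : Set B) := htop ▸ trivial
      have hy2 : y ∈ Algebra.adjoin ↥A ((↑Aa : Set B) ∪ (↑s' : Set B)) := by
        refine Algebra.adjoin_mono ?_ hy
        intro z hz
        rcases Finset.mem_coe.1 hz with h
        rcases Finset.mem_insert.1 h with rfl | h'
        · exact Or.inl (Algebra.self_mem_adjoin_singleton ↥A z)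
        · exact Or.inr (by exact_mod_cast h')
      rw [← Algebra.restrictScalars_adjoin ↥A Aa] at hy2
      rw [Subalgebra.mem_restrictScalars] at hy2
      exact adjoin_base_mono Aa A' (fun z hz => (hmemA' z).2 hz) _ y hy2
    obtain ⟨sa', hsa'0, hsa'⟩ := ih A' hA'fg htop' b hb
    have hsa'B : (↑sa' : B) ≠ 0 := fun h => hsa'0 (Subtype.ext h)
    have hsa'mem : (↑sa' : B) ∈ Aa := (hmemA' _).1 sa'.2
    obtain ⟨sA, hsA0, hsA⟩ := ext_one (B := B) (K := K) hAinj x (↑sa' : B) hsa'B hsa'mem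
    refine ⟨sA, hsA0, fun φ hφ => ?_⟩
    obtain ⟨ψ₂, hψ₂a, hψ₂b⟩ := hsA φ hφ
    -- transfer ψ₂ to A'
    set e' : ↥A' ≃+* ↥Aa :=
      { toFun := fun a => ⟨a.1, (hmemA' a.1).1 a.2⟩
        invFun := fun a => ⟨a.1, (hmemA' a.1).2 a.2⟩
        left_inv := fun a => rfl
        right_inv := fun a => rfl
        map_mul' := fun a b => rfl
        map_add' := fun a b => rfl } with he'
    set φ' : ↥A' →+* K := ψ₂.comp e'.toRingHom with hφ'
    have hφ'sa' : φ' sa' ≠ 0 := by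
      have : e'.toRingHom sa' = (⟨(↑sa' : B), hsa'mem⟩ : ↥Aa) := rfl
      rw [hφ', RingHom.comp_apply, this]
      exact hψ₂b
    obtain ⟨ψ, hψa, hψb⟩ := hsa' φ' hφ'sa'
    refine ⟨ψ, fun a => ?_, hψb⟩
    have hmem : (↑a : B) ∈ A' := (hmemA' _).2 (by
      have := Subalgebra.algebraMap_mem Aa a
      simpa using this)
    have h1 : (↑a : B) = ((⟨(↑a : B), hmem⟩ : ↥A') : B) := rfl
    rw [h1, hψa ⟨(↑a : B), hmem⟩]
    have h2 : e'.toRingHom ⟨(↑a : B), hmem⟩ = algebraMap ↥A ↥Aa a := rfl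
    rw [hφ', RingHom.comp_apply, h2]
    exact hψ₂a a

end ExtMany

section Main

variable {K : Type*} [Field K] {n : ℕ}

/-- the multiplicative character of the torus point `p` -/
noncomputable def torusHom {U : Type*} [CommGroup U] (p : Fin n → U) :
    Multiplicative (Fin n → ℤ) →* U where
  toFun u := ∏ i, (p i) ^ (Multiplicative.toAdd u i)
  map_one' := by simp
  map_mul' u v := by
    simp only [toAdd_mul, Pi.add_apply, zpow_add]
    rw [← Finset.prod_mul_distrib]

theorem single_eq_zsmul (i : Fin n) (z : ℤ) : Pi.single (M := fun _ => ℤ) i z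
    = z • Pi.single i (1 : ℤ) := by
  funext j
  by_cases h : j = i <;> simp [Pi.single_apply, h]

theorem monoidHom_pi_int {U : Type*} [CommGroup U] (m : Multiplicative (Fin n → ℤ) →* U)
    (u : Fin n → ℤ) :
    m (Multiplicative.ofAdd u) =
      ∏ i, (m (Multiplicative.ofAdd (Pi.single i 1))) ^ (u i) := by
  conv_lhs => rw [← Finset.univ_sum_single u, ofAdd_sum, map_prod]
  refine Finset.prod_congr rfl fun i _ => ?_
  rw [single_eq_zsmul i (u i), ofAdd_zsmul, map_zpow]

theorem torusHom_ofAdd (p : Fin n → Kˣ) (u : Fin n → ℤ) :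
    torusHom p (Multiplicative.ofAdd u) = ∏ i, (p i) ^ (u i) := rfl

/-- evaluation as an algebra homomorphism -/
noncomputable def evalHom (p : Fin n → Kˣ) : AddMonoidAlgebra K (Fin n → ℤ) →ₐ[K] K :=
  AddMonoidAlgebra.lift K K (Fin n → ℤ) ((Units.coeHom K).comp (torusHom p))

theorem evalT_eq (f : AddMonoidAlgebra K (Fin n → ℤ)) (p : Fin n → Kˣ) :
    evalT f p = evalHom p f := by
  rw [evalHom, AddMonoidAlgebra.lift_apply]
  refine Finsupp.sum_congr fun u _ => ?_
  rw [smul_eq_mul]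
  congr 1
  rw [MonoidHom.comp_apply, torusHom_ofAdd]
  simp

theorem evalT_single (p : Fin n → Kˣ) (u : Fin n → ℤ) (a : K) :
    evalT (AddMonoidAlgebra.single u a) p = a * ∏ i, (p i : K) ^ (u i) := by
  rw [evalT_eq, evalHom, AddMonoidAlgebra.lift_single]
  rw [MonoidHom.comp_apply, torusHom_ofAdd, smul_eq_mul]
  simp

end Main

section MainProof

variable {K : Type*} [Field K] {n : ℕ}

theorem adjoin_extend {k B : Type*} [CommSemiring k] [CommSemiring B] [Algebra k B]
    (A : Subalgebra k B) (s : Set B) (y : B) (hy : y ∈ Algebra.adjoin k s) :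
    y ∈ Algebra.adjoin ↥A s := by
  induction hy using Algebra.adjoin_induction with
  | mem z hz => exact Algebra.subset_adjoin hz
  | algebraMap r =>
    have h : algebraMap k B r = algebraMap ↥A B (algebraMap k ↥A r) := by
      rw [← IsScalarTower.algebraMap_apply]
    rw [h]; exact Subalgebra.algebraMap_mem _ _
  | add a b _ _ ha hb => exact add_mem ha hb
  | mul a b _ _ ha hb => exact mul_mem ha hb

/-- The vanishing ideal of a subset of the torus. -/
def vanishingIdeal (W : Set (Fin n → Kˣ)) : Ideal (AddMonoidAlgebra K (Fin n → ℤ)) where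
  carrier := {f | ∀ x ∈ W, evalT f x = 0}
  add_mem' := by
    intro f g hf hg x hx
    rw [evalT_eq, map_add, ← evalT_eq, ← evalT_eq, hf x hx, hg x hx, add_zero]
  zero_mem' := by
    intro x hx
    rw [evalT_eq, map_zero]
  smul_mem' := by
    intro a f hf x hx
    rw [smul_eq_mul, evalT_eq, map_mul, ← evalT_eq f, hf x hx, mul_zero]

theorem mem_vanishingIdeal (W : Set (Fin n → Kˣ)) (f : AddMonoidAlgebra K (Fin n → ℤ)) :
    f ∈ vanishingIdeal W ↔ ∀ x ∈ W, evalT f x = 0 := Iff.rfl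

set_option maxHeartbeats 1000000 in
set_option synthInstance.maxHeartbeats 200000 in
theorem statement13' [IsAlgClosed K]
    (val : Kˣ → ℝ) (hval : IsValuation val)
    (W : Set (Fin n → Kˣ)) (hW : IsIrreducibleSubvariety W)
    (c : Fin n → ℤ)
    (htrop : ∃ r : ℝ, ∀ x ∈ W, ∑ i, (c i : ℝ) * val (x i) = r) :
    ∃ z : Kˣ, ∀ x ∈ W, ∏ i, (x i) ^ (c i) = z := by
  classical
  obtain ⟨⟨S, hS⟩, hne, hirr⟩ := hW
  -- coercion of a product of unit powers
  have coeProd : ∀ (x : Fin n → Kˣ), ((∏ i, (x i) ^ (c i) : Kˣ) : K)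
      = ∏ i, ((x i) : K) ^ (c i) := by
    intro x
    rw [← Units.coeHom_apply, map_prod]
    refine Finset.prod_congr rfl fun i _ => ?_
    simp
  -- the vanishing ideal of W
  set I : Ideal (AddMonoidAlgebra K (Fin n → ℤ)) := vanishingIdeal W with hI
  have hmemI : ∀ f : AddMonoidAlgebra K (Fin n → ℤ), f ∈ I ↔ ∀ x ∈ W, evalT f x = 0 :=
    fun f => Iff.rfl
  have hSI : ∀ f ∈ S, f ∈ I := by
    intro f hf
    rw [hmemI]
    intro x hx
    rw [hS] at hx
    exact hx f hf
  haveI hIprime : I.IsPrime := by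
    constructor
    · rw [Ideal.ne_top_iff_one]
      intro h1
      obtain ⟨x₀, hx₀⟩ := hne
      have h3 := (hmemI 1).1 h1 x₀ hx₀
      have h2 : (1 : AddMonoidAlgebra K (Fin n → ℤ)) = AddMonoidAlgebra.single 0 1 := rfl
      rw [h2, evalT_single] at h3
      simp at h3
    · intro f g hfg
      have hsub : W ⊆ zeroLocus {f} ∪ zeroLocus {g} := by
        intro x hx
        have h4 := (hmemI _).1 hfg x hx
        rw [evalT_eq, map_mul, ← evalT_eq, ← evalT_eq] at h4
        rcases mul_eq_zero.1 h4 with h | h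
        · exact Or.inl (fun f' hf' => by rwa [Set.mem_singleton_iff.1 hf'])
        · exact Or.inr (fun f' hf' => by rwa [Set.mem_singleton_iff.1 hf'])
      rcases hirr _ _ ⟨{f}, rfl⟩ ⟨{g}, rfl⟩ hsub with h | h
      · exact Or.inl ((hmemI f).2 fun x hx => h hx f rfl)
      · exact Or.inr ((hmemI g).2 fun x hx => h hx g rfl)
  set π : AddMonoidAlgebra K (Fin n → ℤ) →+* (AddMonoidAlgebra K (Fin n → ℤ) ⧸ I) :=
    Ideal.Quotient.mk I with hπ
  -- monomials give units of the quotient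
  set mon : Multiplicative (Fin n → ℤ) →* (AddMonoidAlgebra K (Fin n → ℤ) ⧸ I) :=
    π.toMonoidHom.comp (AddMonoidAlgebra.of K (Fin n → ℤ)) with hmon
  set t : AddMonoidAlgebra K (Fin n → ℤ) ⧸ I := mon (Multiplicative.ofAdd c) with htdef
  have ht0 : t ≠ 0 := by
    have h := Units.ne_zero (mon.toHomUnits (Multiplicative.ofAdd c))
    rwa [MonoidHom.coe_toHomUnits] at h
  -- point of W from a homomorphism
  have pointFromHom : ∀ ψ : (AddMonoidAlgebra K (Fin n → ℤ) ⧸ I) →+* K,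
      (∀ r : K, ψ (algebraMap K _ r) = r) →
      ∃ x ∈ W, ((∏ i, (x i) ^ (c i) : Kˣ) : K) = ψ t := by
    intro ψ hψK
    set m : Multiplicative (Fin n → ℤ) →* K := ψ.toMonoidHom.comp mon with hm
    set p : Fin n → Kˣ := fun i => m.toHomUnits (Multiplicative.ofAdd (Pi.single i 1)) with hp
    have hprod : ∀ u : Fin n → ℤ,
        ((∏ i, (p i) ^ (u i) : Kˣ) : K) = ψ (mon (Multiplicative.ofAdd u)) := by
      intro u
      rw [← monoidHom_pi_int m.toHomUnits u, MonoidHom.coe_toHomUnits]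
      rfl
    set ψA : (AddMonoidAlgebra K (Fin n → ℤ) ⧸ I) →ₐ[K] K :=
      { toRingHom := ψ, commutes' := hψK } with hψA
    have hEval : ∀ f : AddMonoidAlgebra K (Fin n → ℤ), evalT f p = ψ (π f) := by
      have hhom : evalHom p = ψA.comp (Ideal.Quotient.mkₐ K I) := by
        apply AddMonoidAlgebra.algHom_ext ?_ (Subsingleton.elim _ _)
        intro u
        rw [evalHom, AddMonoidAlgebra.lift_single]
        rw [one_smul, MonoidHom.comp_apply, torusHom_ofAdd]
        have h1 : (ψA.comp (Ideal.Quotient.mkₐ K I)) (AddMonoidAlgebra.single u 1)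
            = ψ (mon (Multiplicative.ofAdd u)) := rfl
        rw [h1, ← hprod]
        rfl
      intro f
      rw [evalT_eq, hhom]
      rfl
    have hpW : p ∈ W := by
      rw [hS]
      intro f hf
      rw [hEval f, (Ideal.Quotient.eq_zero_iff_mem).2 (hSI f hf), map_zero]
    exact ⟨p, hpW, by rw [hprod c]⟩
  -- the valuation as a monoid hom
  have val_one : val 1 = 0 := by
    have h := hval.map_mul 1 1
    rw [mul_one] at h
    linarith
  set F : Kˣ →* Multiplicative ℝ :=
    { toFun := fun a => Multiplicative.ofAdd (val a)
      map_one' := by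
        show Multiplicative.ofAdd (val 1) = 1
        rw [val_one]; rfl
      map_mul' := fun a b => by
        show Multiplicative.ofAdd (val (a * b))
          = Multiplicative.ofAdd (val a) * Multiplicative.ofAdd (val b)
        rw [hval.map_mul]; rfl } with hF
  have valF : ∀ a : Kˣ, val a = Multiplicative.toAdd (F a) := fun a => rfl
  have valProd : ∀ x : Fin n → Kˣ,
      val (∏ i, (x i) ^ (c i)) = ∑ i, (c i : ℝ) * val (x i) := by
    intro x
    rw [valF, map_prod, toAdd_prod]
    refine Finset.sum_congr rfl fun i _ => ?_
    rw [map_zpow, toAdd_zpow, zsmul_eq_mul, valF]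
  have valPow : ∀ (a : Kˣ) (z : ℤ), val (a ^ z) = z * val a := by
    intro a z
    rw [valF, map_zpow, toAdd_zpow, zsmul_eq_mul, valF]
  by_cases halg : IsAlgebraic K t
  · -- algebraic case : the character is constant on W
    obtain ⟨P, hP0, hPt⟩ := halg
    have hsplits : Polynomial.Splits P := IsAlgClosed.splits P
    have hfact := hsplits.eq_prod_roots
    rw [hfact, map_mul, Polynomial.aeval_C, map_multiset_prod, Multiset.map_map] at hPt
    have hlc : algebraMap K (AddMonoidAlgebra K (Fin n → ℤ) ⧸ I) P.leadingCoeff ≠ 0 := by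
      intro h
      exact hP0 (Polynomial.leadingCoeff_eq_zero.1
        ((algebraMap K _).injective (by rw [h, map_zero])))
    have h2 : Multiset.map ((Polynomial.aeval t) ∘ fun a => Polynomial.X - Polynomial.C a)
          P.roots
        = Multiset.map (fun a => t - algebraMap K _ a) P.roots :=
      Multiset.map_congr rfl (fun a _ => by simp)
    rw [h2] at hPt
    rcases mul_eq_zero.1 hPt with h | h
    · exact absurd h hlc
    · obtain ⟨lam, _, hlam⟩ := Multiset.mem_map.1 (Multiset.prod_eq_zero_iff.1 h)
      have htlam : t = algebraMap K _ lam := by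
        have := sub_eq_zero.1 hlam
        exact this
      have hlam0 : lam ≠ 0 := by
        rintro rfl
        rw [map_zero] at htlam
        exact ht0 htlam
      -- the monomial minus the constant vanishes on W
      have hofR : (AddMonoidAlgebra.of K (Fin n → ℤ)) (Multiplicative.ofAdd c)
          = AddMonoidAlgebra.single c (1 : K) := by
        simp [AddMonoidAlgebra.of_apply]
      have halgmap : π (algebraMap K (AddMonoidAlgebra K (Fin n → ℤ)) lam)
          = algebraMap K _ lam := by
        have h := (Ideal.Quotient.mkₐ K I).commutes lam
        rwa [Ideal.Quotient.mkₐ_eq_mk] at h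
      have hf₀ : (AddMonoidAlgebra.single c (1 : K)
          - algebraMap K (AddMonoidAlgebra K (Fin n → ℤ)) lam) ∈ I := by
        rw [← Ideal.Quotient.eq_zero_iff_mem]
        have hof : π (AddMonoidAlgebra.single c (1 : K)) = t := by
          rw [htdef, hmon, MonoidHom.comp_apply, hofR]
          rfl
        rw [map_sub, hof, halgmap, htlam, sub_self]
      refine ⟨Units.mk0 lam hlam0, fun x hx => ?_⟩
      have hev := (hmemI _).1 hf₀ x hx
      have hconst : evalT (algebraMap K (AddMonoidAlgebra K (Fin n → ℤ)) lam) x = lam := by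
        rw [evalT_eq]; exact (evalHom x).commutes lam
      rw [evalT_eq, map_sub, ← evalT_eq, ← evalT_eq, evalT_single, one_mul,
        hconst, sub_eq_zero] at hev
      apply Units.ext
      rw [coeProd, hev]
      rfl
  · -- transcendental case : contradiction with the tropical hypothesis
    exfalso
    obtain ⟨r, hr⟩ := htrop
    have hinjaeval : Function.Injective (Polynomial.aeval t :
        Polynomial K →ₐ[K] (AddMonoidAlgebra K (Fin n → ℤ) ⧸ I)) := by
      intro p q h
      by_contra hne'
      exact halg ⟨p - q, sub_ne_zero.2 hne', by rw [map_sub, h, sub_self]⟩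
    -- finite generation
    haveI hfgM : AddMonoid.FG (Fin n → ℤ) :=
      AddGroup.fg_iff_addMonoid_fg.1 (Module.Finite.iff_addGroup_fg.1 inferInstance)
    haveI hft : Algebra.FiniteType K (AddMonoidAlgebra K (Fin n → ℤ) ⧸ I) :=
      Algebra.FiniteType.of_surjective (Ideal.Quotient.mkₐ K I)
        (Ideal.Quotient.mkₐ_surjective K I)
    obtain ⟨s₀, hs₀⟩ := hft.out
    set A₀ : Subalgebra K (AddMonoidAlgebra K (Fin n → ℤ) ⧸ I) :=
      (Polynomial.aeval t : Polynomial K →ₐ[K] _).range with hA₀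
    have hA₀fg : A₀.FG := by
      refine ⟨{t}, ?_⟩
      rw [Finset.coe_singleton]
      exact Algebra.adjoin_singleton_eq_range_aeval K t
    have htopA₀ : Algebra.adjoin ↥A₀ (↑s₀ : Set (AddMonoidAlgebra K (Fin n → ℤ) ⧸ I)) = ⊤ := by
      rw [eq_top_iff]
      rintro y -
      exact adjoin_extend A₀ _ y (by rw [hs₀]; trivial)
    obtain ⟨sa, hsa0, hsa⟩ := ext_many (K := K) s₀ A₀ hA₀fg htopA₀ t ht0
    obtain ⟨fs, hfs⟩ := sa.2
    have hfs0 : fs ≠ 0 := by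
      rintro rfl
      rw [map_zero] at hfs
      exact hsa0 (Subtype.ext hfs.symm)
    set E := AlgEquiv.ofInjective (Polynomial.aeval t) hinjaeval with hE
    have hEfs : E fs = sa := Subtype.ext (by
      rw [AlgEquiv.ofInjective_apply]; exact hfs)
    have htmem : t ∈ A₀ := ⟨Polynomial.X, Polynomial.aeval_X t⟩
    have hEX : E Polynomial.X = ⟨t, htmem⟩ := Subtype.ext (by
      rw [AlgEquiv.ofInjective_apply, Polynomial.aeval_X])
    -- pick a good value a = a₀ ^ m
    obtain ⟨a₀, ha₀⟩ := hval.nontrivial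
    set g : ℕ → K := fun m => ((a₀ ^ (m : ℤ) : Kˣ) : K) with hg
    have hginj : Function.Injective g := by
      intro m₁ m₂ h
      have hu : a₀ ^ (m₁ : ℤ) = a₀ ^ (m₂ : ℤ) := Units.ext h
      have hv := congrArg val hu
      rw [valPow, valPow] at hv
      have : (m₁ : ℝ) = m₂ := by
        have h := mul_right_cancel₀ ha₀ hv
        exact_mod_cast h
      exact_mod_cast this
    have hSb1 : {m : ℕ | fs.eval (g m) = 0}.Finite := by
      have : {m : ℕ | fs.eval (g m) = 0} ⊆ g ⁻¹' {x | fs.IsRoot x} := fun m hm => hm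
      exact Set.Finite.subset
        ((Polynomial.finite_setOf_isRoot hfs0).preimage (hginj.injOn)) this
    have hSb2 : {m : ℕ | (m : ℝ) * val a₀ = r}.Finite := by
      refine Set.Subsingleton.finite ?_
      intro m₁ h₁ m₂ h₂
      have : (m₁ : ℝ) * val a₀ = (m₂ : ℝ) * val a₀ := by
        rw [Set.mem_setOf_eq] at h₁ h₂
        rw [h₁, h₂]
      have : (m₁ : ℝ) = m₂ := mul_right_cancel₀ ha₀ this
      exact_mod_cast this
    obtain ⟨m, hm⟩ := (hSb1.union hSb2).infinite_compl.nonempty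
    rw [Set.mem_compl_iff, Set.mem_union, not_or] at hm
    obtain ⟨hm1, hm2⟩ := hm
    -- the evaluation homomorphism at a = g m
    set φa : ↥A₀ →+* K :=
      (Polynomial.evalRingHom (g m)).comp E.symm.toAlgHom.toRingHom with hφa
    have hφsa : φa sa = fs.eval (g m) := by
      rw [hφa, RingHom.comp_apply]
      have : E.symm sa = fs := by rw [← hEfs, AlgEquiv.symm_apply_apply]
      have h5 : E.symm.toAlgHom.toRingHom sa = fs := this
      rw [h5]
      simp
    obtain ⟨ψ, hψa, -⟩ := hsa φa (by rw [hφsa]; exact hm1)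
    have hψK : ∀ rr : K, ψ (algebraMap K _ rr) = rr := by
      intro rr
      have h6 : algebraMap K (AddMonoidAlgebra K (Fin n → ℤ) ⧸ I) rr
          = ↑(algebraMap K ↥A₀ rr) := rfl
      rw [h6, hψa]
      rw [hφa, RingHom.comp_apply]
      have h7 : E.symm.toAlgHom.toRingHom (algebraMap K ↥A₀ rr)
          = Polynomial.C rr := by
        have := E.symm.commutes rr
        rw [← Polynomial.algebraMap_eq]; exact this
      rw [h7]
      simp
    have hψt : ψ t = g m := by
      have h8 : t = ((⟨t, htmem⟩ : ↥A₀) : AddMonoidAlgebra K (Fin n → ℤ) ⧸ I) := rfl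
      rw [h8, hψa]
      rw [hφa, RingHom.comp_apply]
      have h9 : E.symm.toAlgHom.toRingHom ⟨t, htmem⟩ = Polynomial.X := by
        have : E.symm ⟨t, htmem⟩ = Polynomial.X := by
          rw [← hEX, AlgEquiv.symm_apply_apply]
        exact this
      rw [h9]
      simp
    obtain ⟨x, hxW, hxval⟩ := pointFromHom ψ hψK
    have hxu : (∏ i, (x i) ^ (c i) : Kˣ) = a₀ ^ (m : ℤ) := by
      apply Units.ext
      rw [hxval, hψt]
    have h10 := hr x hxW
    rw [← valProd, hxu, valPow] at h10
    apply hm2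
    rw [Set.mem_setOf_eq]
    exact_mod_cast h10

end MainProof

/-- Let `W ⊂ (K*)ⁿ` be an irreducible subvariety and `u : (K*)ⁿ → K*` a character, given
by an exponent vector `c ∈ ℤⁿ`, such that the image of the tropicalization of `W` under
the induced linear map `ℝⁿ → ℝ` is a single point (i.e. the valuations of `u(x)` for
`x ∈ W` take a single value `r`).  Then `u` is constant on `W`. -/
theorem statement13 {n : ℕ} {K : Type*} [Field K] [IsAlgClosed K]
    (val : Kˣ → ℝ) (hval : IsValuation val)
    (W : Set (Fin n → Kˣ)) (hW : IsIrreducibleSubvariety W)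
    (c : Fin n → ℤ)
    (htrop : ∃ r : ℝ, ∀ x ∈ W, ∑ i, (c i : ℝ) * val (x i) = r) :
    ∃ z : Kˣ, ∀ x ∈ W, ∏ i, (x i) ^ (c i) = z := by
  exact statement13' val hval W hW c htrop
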